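/- Let X be a compact metric space with no isolated points (and at least one point, hence infinitely many points). Then no homeomorphism f : X → X is positively expansive. -/

import Mathlib

/-!
Compactness makes positive expansivity uniform: for every `ε > 0` there is `N` such that two
points whose first `N` iterates stay `ρ`-close are `ε`-close. For an injective `f` compactness also
makes `f⁻¹` uniformly continuous on the image, and a downward induction along the orbit shows
that there is `δ > 0` such that `f^[k] a, f^[k] b` being `δ`-close forces all earlier iterates to
be `ρ`-close. Hence `f^[M] a, f^[M] b` being `δ`-close forces `a, b` to be `ε`-close, with `M`
depending on `ε` but `δ` not. Covering `X` by finitely many `δ/2`-balls and applying the pigeonhole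
principle to `f^[M]`, `X` has at most as many points as there are balls. A finite metric space is
discrete, which no nonempty perfect space is.
-/

open Filter Function Set Metric Topology

section

variable {X Y : Type*} [MetricSpace X]

def PositivelyExpansiveWith (f : X → X) (ρ : ℝ) : Prop :=
  ∀ x y, x ≠ y → ∃ n : ℕ, ρ < dist (f^[n] x) (f^[n] y)

lemma Finset.exists_pos_le_dist (s : Finset X) :
    ∃ ε > 0, ∀ a ∈ s, ∀ b ∈ s, a ≠ b → ε ≤ dist a b := by
  obtain ⟨ε, hε, hle⟩ := s.offDiag.finite_toSet.isCompact.exists_forall_le'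
    continuous_dist.continuousOn (a := 0) fun p hp => dist_pos.2 (Finset.mem_offDiag.1 hp).2.2
  exact ⟨ε, hε, fun a ha b hb hab => hle (a, b) (Finset.mem_offDiag.2 ⟨ha, hb, hab⟩)⟩

lemma finite_of_forall_exists_dist_lt_imp_dist_lt [MetricSpace Y] [CompactSpace Y] {δ : ℝ}
    (hδ : 0 < δ) (h : ∀ ε > 0, ∃ F : X → Y, ∀ a b, dist (F a) (F b) < δ → dist a b < ε) :
    Finite X := by
  obtain ⟨t, -, ht, hcover⟩ := finite_cover_balls_of_compact (isCompact_univ (X := Y)) (half_pos hδ)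
  by_contra hX
  have : Infinite X := not_finite_iff_infinite.1 hX
  obtain ⟨s, hs⟩ := Infinite.exists_subset_card_eq X (ht.toFinset.card + 1)
  obtain ⟨ε, hε, hsep⟩ := s.exists_pos_le_dist
  obtain ⟨F, hF⟩ := h ε hε
  choose c hct hc using fun a => mem_iUnion₂.1 (hcover (mem_univ (F a)))
  obtain ⟨a, ha, b, hb, hab, hcab⟩ := Finset.exists_ne_map_eq_of_card_lt_of_maps_to
    (by omega : ht.toFinset.card < s.card) fun a _ => ht.mem_toFinset.2 (hct a)
  have hFab : dist (F a) (F b) < δ := by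
    have hb' := mem_ball.1 (hc b)
    rw [← hcab] at hb'
    linarith [dist_triangle_right (F a) (F b) (c a), mem_ball.1 (hc a)]
  exact (hsep a ha b hb hab).not_gt (hF a b hFab)

lemma Continuous.eventually_dist_lt_imp_dist_lt [CompactSpace X] [MetricSpace Y] {F : X → Y}
    (hF : Continuous F) (hinj : Injective F) {ρ : ℝ} (hρ : 0 < ρ) :
    ∀ᶠ η in 𝓝[>] 0, ∀ u v, dist (F u) (F v) < η → dist u v < ρ := by
  have hK : IsCompact {p : X × X | ρ ≤ dist p.1 p.2} :=
    (isClosed_le continuous_const continuous_dist).isCompact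
  obtain ⟨η, hη, hle⟩ := hK.exists_forall_le' (f := fun p => dist (F p.1) (F p.2)) (by fun_prop)
    (a := 0) fun p hp => dist_pos.2 (hinj.ne (dist_pos.1 (hρ.trans_le hp)))
  filter_upwards [Ioc_mem_nhdsGT hη] with η' hη' u v huv
  exact not_le.1 fun h => (huv.trans_le hη'.2).not_ge (hle (u, v) h)

namespace PositivelyExpansiveWith

variable [CompactSpace X] {f : X → X} {ρ : ℝ}

lemma exists_dist_lt (hexp : PositivelyExpansiveWith f ρ) (hf : Continuous f) {ε : ℝ}
    (hε : 0 < ε) : ∃ N, ∀ x y, (∀ n ≤ N, dist (f^[n] x) (f^[n] y) ≤ ρ) → dist x y < ε := by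
  have hK : IsCompact {p : X × X | ε ≤ dist p.1 p.2} :=
    (isClosed_le continuous_const continuous_dist).isCompact
  have hU (n : ℕ) : IsOpen {p : X × X | ρ < dist (f^[n] p.1) (f^[n] p.2)} := by
    have := hf.iterate n
    exact isOpen_lt continuous_const (by fun_prop)
  obtain ⟨t, ht⟩ := hK.elim_finite_subcover _ hU fun p hp =>
    mem_iUnion.2 (hexp p.1 p.2 fun h => (hε.trans_le hp).ne' (by rw [h, dist_self]))
  refine ⟨t.sup id, fun x y hxy => not_le.1 fun hε' => ?_⟩
  obtain ⟨n, hn, hlt⟩ := mem_iUnion₂.1 (@ht (x, y) hε')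
  exact (hxy n (Finset.le_sup (f := id) hn)).not_gt hlt

lemma exists_dist_iterate_lt (hexp : PositivelyExpansiveWith f ρ) (hρ : 0 < ρ)
    (hf : Continuous f) (hinj : Injective f) :
    ∃ δ > 0, ∀ a b k, dist (f^[k] a) (f^[k] b) < δ → ∀ m ≤ k, dist (f^[m] a) (f^[m] b) < ρ := by
  obtain ⟨η, hfη, hη⟩ :=
    ((hf.eventually_dist_lt_imp_dist_lt hinj hρ).and self_mem_nhdsWithin).exists
  obtain ⟨N, hN⟩ := hexp.exists_dist_lt hf hη
  obtain ⟨δ, hδ', hδ⟩ := (((eventually_all_finite (finite_Iic N)).2 fun j _ =>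
    (hf.iterate j).eventually_dist_lt_imp_dist_lt (hinj.iterate j) hρ).and
      self_mem_nhdsWithin).exists
  refine ⟨δ, hδ, fun a b k hk => ?_⟩
  suffices ∀ j m, m + j = k → dist (f^[m] a) (f^[m] b) < ρ from
    fun m hm => this (k - m) m (by omega)
  intro j
  induction j using Nat.strong_induction_on with
  | _ j ih =>
    intro m hmj
    rcases le_or_gt j N with hj | hj
    · refine hδ' j hj _ _ ?_
      rwa [← iterate_add_apply, ← iterate_add_apply, show j + m = k by omega]
    · refine hfη _ _ ?_
      rw [← iterate_succ_apply' f m a, ← iterate_succ_apply' f m b]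
      refine hN _ _ fun n hn => ?_
      rw [← iterate_add_apply, ← iterate_add_apply]
      exact (ih (j - n - 1) (by omega) (n + (m + 1)) (by omega)).le

theorem finite (hexp : PositivelyExpansiveWith f ρ) (hρ : 0 < ρ) (hf : Continuous f)
    (hinj : Injective f) : Finite X := by
  obtain ⟨δ, hδ, hstable⟩ := hexp.exists_dist_iterate_lt hρ hf hinj
  refine finite_of_forall_exists_dist_lt_imp_dist_lt (Y := X) hδ fun ε hε => ?_
  obtain ⟨M, hM⟩ := hexp.exists_dist_lt hf hε
  exact ⟨f^[M], fun a b hab => hM a b fun n hn => (hstable a b M hab n hn).le⟩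

end PositivelyExpansiveWith

end

theorem stmt15 {X : Type*} [MetricSpace X] [CompactSpace X] [Nonempty X]
    (hperf : ∀ x : X, ¬ IsOpen ({x} : Set X)) (f : X ≃ₜ X) :
    ¬ ∃ ρ > (0:ℝ), ∀ x y : X, x ≠ y →
      ∃ n : ℕ, ρ < dist ((⇑f)^[n] x) ((⇑f)^[n] y) := by
  rintro ⟨ρ, hρ, hexp⟩
  have : Finite X := PositivelyExpansiveWith.finite hexp hρ f.continuous f.injective
  exact hperf (Classical.arbitrary X) (isOpen_discrete _)
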